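/- arXiv:1501.00880 — 2 statements merged into one kernel-verified Lean document; each statement's English description precedes it below -/
import Mathlib

section
/- Let H_0 = Vᵀ B_0 V and H_1 = Vᵀ B_1 V where V is an invertible matrix satisfying V C = Jᵀ V for a matrix C and a matrix J, and suppose B_0 is invertible and B_0 Jᵀ = J B_0. If H_0 C = H_1, then J B_0 = B_1, and consequently H_1 − λ H_0 = Vᵀ (J − λ I) B_0 V for all λ; in particular the eigenvalues of the pencil (H_1, H_0) coincide with the eigenvalues of J. -/
open Matrix Finset

theorem pencil_vandermonde_factorization (m : ℕ)
    (V C J B0 B1 H0 H1 : Matrix (Fin m) (Fin m) ℂ)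
    (hVinv : IsUnit V.det) (hB0inv : IsUnit B0.det)
    (hVC : V * C = Jᵀ * V)
    (hB0J : B0 * Jᵀ = J * B0)
    (hH0 : H0 = Vᵀ * B0 * V) (hH1 : H1 = Vᵀ * B1 * V)
    (hpencil : H0 * C = H1) :
    J * B0 = B1 ∧
    (∀ lam : ℂ, H1 - lam • H0 = Vᵀ * (J - lam • (1 : Matrix (Fin m) (Fin m) ℂ)) * (B0 * V)) ∧
    (∃ c : ℂ, c ≠ 0 ∧ ∀ lam : ℂ,
      (H1 - lam • H0).det = c * (J - lam • (1 : Matrix (Fin m) (Fin m) ℂ)).det) := by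
  have hVTinv : IsUnit Vᵀ.det := by rwa [Matrix.det_transpose]
  have iV : Invertible V := V.invertibleOfIsUnitDet hVinv
  have iVT : Invertible Vᵀ := Vᵀ.invertibleOfIsUnitDet hVTinv
  have key : J * B0 = B1 := by
    have h1 : Vᵀ * (J * B0) * V = Vᵀ * B1 * V := by
      calc Vᵀ * (J * B0) * V = Vᵀ * (B0 * Jᵀ) * V := by rw [hB0J]
        _ = Vᵀ * B0 * (Jᵀ * V) := by noncomm_ring
        _ = Vᵀ * B0 * (V * C) := by rw [hVC]
        _ = (Vᵀ * B0 * V) * C := by noncomm_ring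
        _ = Vᵀ * B1 * V := by rw [← hH0, hpencil, hH1]
    have h2 : ⅟Vᵀ * (Vᵀ * (J * B0) * V) * ⅟V = ⅟Vᵀ * (Vᵀ * B1 * V) * ⅟V := by rw [h1]
    simpa [Matrix.mul_assoc] using h2
  have fact : ∀ lam : ℂ, H1 - lam • H0 =
      Vᵀ * (J - lam • (1 : Matrix (Fin m) (Fin m) ℂ)) * (B0 * V) := by
    intro lam
    rw [hH0, hH1, ← key]
    simp only [Matrix.mul_sub, Matrix.sub_mul, Matrix.smul_mul, Matrix.mul_smul,
      Matrix.one_mul, Matrix.mul_one, Matrix.mul_assoc]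
  refine ⟨key, fact, (Vᵀ.det * (B0.det * V.det)), ?_, ?_⟩
  · simp only [Matrix.det_transpose]
    exact mul_ne_zero hVinv.ne_zero (mul_ne_zero hB0inv.ne_zero hVinv.ne_zero)
  · intro lam
    rw [fact lam, Matrix.det_mul, Matrix.det_mul, Matrix.det_mul]
    ring
end

section
/- Let T(λ) be the 3×3 upper triangular quadratic matrix polynomial with T(λ) = λ²I + λ·diag-type matrix T_1 + T_0 where T_1 = [[−7,1,0],[0,−6,0],[0,0,−8]] and T_0 = [[12,−3,0],[0,9,1],[0,0,16]]. Then for every x ∈ ℂ, the matrix S_t(x) = [[4, x, x+1],[0,3,−1],[0,0,4]] satisfies T(S_t(x)) = S_t(x)² + T_1 S_t(x) + T_0 = 0; in particular T has infinitely many solvents. -/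
open Matrix

theorem infinitely_many_solvents :
    (∀ x : ℂ,
      (!![(4:ℂ), x, x+1; 0, 3, -1; 0, 0, 4]) ^ 2
        + !![(-7:ℂ),1,0;0,-6,0;0,0,-8] * !![(4:ℂ), x, x+1; 0, 3, -1; 0, 0, 4]
        + !![(12:ℂ),-3,0;0,9,1;0,0,16] = 0) ∧
    {S : Matrix (Fin 3) (Fin 3) ℂ |
      S ^ 2 + !![(-7:ℂ),1,0;0,-6,0;0,0,-8] * S + !![(12:ℂ),-3,0;0,9,1;0,0,16] = 0}.Infinite := by
  have key : ∀ x : ℂ,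
      (!![(4:ℂ), x, x+1; 0, 3, -1; 0, 0, 4]) ^ 2
        + !![(-7:ℂ),1,0;0,-6,0;0,0,-8] * !![(4:ℂ), x, x+1; 0, 3, -1; 0, 0, 4]
        + !![(12:ℂ),-3,0;0,9,1;0,0,16] = 0 := by
    intro x
    ext i j
    fin_cases i <;> fin_cases j <;>
      simp [pow_two, Matrix.mul_apply, Fin.sum_univ_succ, Matrix.vecHead, Matrix.vecTail] <;> ring
  refine ⟨key, ?_⟩
  apply Set.infinite_of_injective_forall_mem
    (f := fun x : ℂ => !![(4:ℂ), x, x+1; 0, 3, -1; 0, 0, 4])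
  case hi =>
    intro a b hab
    have := congrFun (congrFun hab 0) 1
    simpa using this
  case hf =>
    intro x
    exact key x
end
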